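/- Let E be a CPTP map from M_n(C) to M_k(C) and ρ a positive definite density matrix on C^n with E(ρ) positive definite. Then the Petz recovery map R(Y) := ρ^{1/2} E†(E(ρ)^{-1/2} Y E(ρ)^{-1/2}) ρ^{1/2} is completely positive and trace-preserving, and satisfies R(E(ρ)) = ρ. -/

import Mathlib

/-! The Kraus form `E(X) = ∑ₐ Eₐ X Eₐᴴ` of `E` turns the Petz map into the Kraus map with
operators `Fₐ = ρ^{1/2} Eₐᴴ σ^{-1/2}`, where `σ = E(ρ)`.  Every Kraus map is completely positive,
since `id ⊗ K` is again a Kraus map, with operators `1 ⊗ Kₐ`; and it is trace-preserving as soon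
as `∑ₐ Kₐᴴ Kₐ = 1`, which for the `Fₐ` reads `σ^{-1/2} E(ρ) σ^{-1/2} = 1`.  Finally
`R(σ) = ρ^{1/2} E†(1) ρ^{1/2} = ρ` because `E†(1) = ∑ₐ Eₐᴴ Eₐ = 1`. -/

open Matrix
open scoped ComplexOrder Kronecker

noncomputable def tensorId13 {γ ι κ : Type*}
    (L : Matrix ι ι ℂ → Matrix κ κ ℂ)
    (M : Matrix (γ × ι) (γ × ι) ℂ) : Matrix (γ × κ) (γ × κ) ℂ :=
  fun p q => L (fun i j => M (p.1, i) (q.1, j)) p.2 q.2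

/-- The square root `Matrix.PosSemidef.sqrt` of the older Mathlib (removed since), with its
old definition. -/
noncomputable def posSemidefSqrt13 {n : Type*} [Fintype n] [DecidableEq n] {A : Matrix n n ℂ}
    (hA : A.PosSemidef) : Matrix n n ℂ :=
  hA.1.eigenvectorUnitary.1 * diagonal ((↑) ∘ (√·) ∘ hA.1.eigenvalues) *
    (star hA.1.eigenvectorUnitary : Matrix n n ℂ)

section Sqrt

variable {n : Type*} [Fintype n] [DecidableEq n] {A : Matrix n n ℂ}

theorem conjTranspose_posSemidefSqrt13 (hA : A.PosSemidef) :
    (posSemidefSqrt13 hA)ᴴ = posSemidefSqrt13 hA := by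
  have hD : (diagonal ((↑) ∘ (√·) ∘ hA.1.eigenvalues : n → ℂ))ᴴ =
      diagonal ((↑) ∘ (√·) ∘ hA.1.eigenvalues) := by
    rw [diagonal_conjTranspose]
    congr 1
    funext i
    simp [Complex.conj_ofReal]
  simp only [posSemidefSqrt13, conjTranspose_mul, hD, star_eq_conjTranspose,
    conjTranspose_conjTranspose, Matrix.mul_assoc]

theorem posSemidefSqrt13_mul_self (hA : A.PosSemidef) :
    posSemidefSqrt13 hA * posSemidefSqrt13 hA = A := by
  set U : Matrix n n ℂ := (hA.1.eigenvectorUnitary : Matrix n n ℂ)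
  set D : Matrix n n ℂ := diagonal ((↑) ∘ (√·) ∘ hA.1.eigenvalues)
  have hU : star U * U = 1 := Unitary.coe_star_mul_self _
  have hDD : D * D = diagonal (RCLike.ofReal ∘ hA.1.eigenvalues) := by
    rw [diagonal_mul_diagonal]
    congr 1
    funext i
    simp only [Function.comp_apply]
    rw [← Complex.ofReal_mul, Real.mul_self_sqrt (hA.eigenvalues_nonneg i)]
    rfl
  conv_rhs => rw [hA.1.spectral_theorem, Unitary.conjStarAlgAut_apply]
  calc posSemidefSqrt13 hA * posSemidefSqrt13 hA = U * D * (star U * U) * D * star U := by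
        simp only [posSemidefSqrt13, U, D, Matrix.mul_assoc]
    _ = _ := by rw [hU, Matrix.mul_one, Matrix.mul_assoc U D D, hDD]

end Sqrt

section Kraus

variable {ι μ κ : Type*} [Fintype ι] [Fintype μ]

def krausMap (K : ι → Matrix κ μ ℂ) (X : Matrix μ μ ℂ) : Matrix κ κ ℂ :=
  ∑ a, K a * X * (K a)ᴴ

theorem krausMap_mul_left [Fintype κ] {ν : Type*} (A : Matrix ν κ ℂ)
    (K : ι → Matrix κ μ ℂ) (X : Matrix μ μ ℂ) :
    krausMap (fun a => A * K a) X = A * krausMap K X * Aᴴ := by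
  simp only [krausMap, Matrix.mul_sum, Matrix.sum_mul, conjTranspose_mul, Matrix.mul_assoc]

theorem krausMap_mul_right {ν : Type*} [Fintype ν] (K : ι → Matrix κ μ ℂ)
    (B : Matrix μ ν ℂ) (X : Matrix ν ν ℂ) :
    krausMap (fun a => K a * B) X = krausMap K (B * X * Bᴴ) := by
  simp only [krausMap, conjTranspose_mul, Matrix.mul_assoc]

theorem trace_krausMap [Fintype κ] [DecidableEq μ] {K : ι → Matrix κ μ ℂ}
    (hK : ∑ a, (K a)ᴴ * K a = 1) (X : Matrix μ μ ℂ) :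
    (krausMap K X).trace = X.trace := by
  simp only [krausMap, trace_sum, trace_mul_cycle (K _)]
  rw [← trace_sum, ← Matrix.sum_mul, hK, Matrix.one_mul]

theorem Matrix.PosSemidef.krausMap [Fintype κ] (K : ι → Matrix κ μ ℂ) {X : Matrix μ μ ℂ}
    (hX : X.PosSemidef) :
    (krausMap K X).PosSemidef :=
  posSemidef_sum _ fun a _ => hX.mul_mul_conjTranspose_same (K a)

theorem one_kronecker_mul_mul_conjTranspose_apply {γ : Type*} [Fintype γ] [DecidableEq γ]
    (K : Matrix κ μ ℂ) (M : Matrix (γ × μ) (γ × μ) ℂ) (p q : γ × κ) :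
    (((1 : Matrix γ γ ℂ) ⊗ₖ K) * M * ((1 : Matrix γ γ ℂ) ⊗ₖ K)ᴴ) p q =
      (K * Matrix.of (fun i j => M (p.1, i) (q.1, j)) * Kᴴ) p.2 q.2 := by
  simp only [mul_apply, kroneckerMap_apply, one_apply, ite_mul, one_mul, zero_mul,
    Fintype.sum_prod_type, Finset.sum_ite_irrel, Finset.sum_const_zero, Finset.sum_ite_eq,
    Finset.mem_univ, ↓reduceIte, conjTranspose_apply, RCLike.star_def,
    apply_ite (starRingEnd ℂ), map_zero, mul_ite, Finset.sum_mul, mul_zero, of_apply]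

theorem tensorId13_krausMap {γ : Type*} [Fintype γ] [DecidableEq γ] (K : ι → Matrix κ μ ℂ)
    (M : Matrix (γ × μ) (γ × μ) ℂ) :
    tensorId13 (krausMap K) M = krausMap (fun a => (1 : Matrix γ γ ℂ) ⊗ₖ K a) M := by
  ext p q
  simp only [tensorId13, krausMap, Matrix.sum_apply, one_kronecker_mul_mul_conjTranspose_apply]
  rfl

theorem posSemidef_tensorId13_krausMap [Fintype κ] {γ : Type*} [Fintype γ] [DecidableEq γ]
    (K : ι → Matrix κ μ ℂ) {M : Matrix (γ × μ) (γ × μ) ℂ} (hM : M.PosSemidef) :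
    (tensorId13 (krausMap K) M).PosSemidef := by
  rw [tensorId13_krausMap]
  exact hM.krausMap _

end Kraus

section Petz

variable {ι μ κ : Type*} [Fintype ι] [Fintype μ] [Fintype κ] [DecidableEq κ]
  (E : ι → Matrix κ μ ℂ) {r : Matrix μ μ ℂ} {s : Matrix κ κ ℂ}

theorem inv_mul_mul_self_mul_inv (hs : IsUnit s.det) : s⁻¹ * (s * s) * s⁻¹ = 1 := by
  rw [← Matrix.mul_assoc, nonsing_inv_mul _ hs, Matrix.one_mul, mul_nonsing_inv _ hs]

noncomputable def petzKraus (r : Matrix μ μ ℂ) (s : Matrix κ κ ℂ) (a : ι) :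
    Matrix μ κ ℂ :=
  r * (E a)ᴴ * s⁻¹

theorem petz_eq_krausMap_petzKraus (hr : rᴴ = r) (hs : sᴴ = s) (Y : Matrix κ κ ℂ) :
    r * (∑ a, (E a)ᴴ * (s⁻¹ * Y * s⁻¹) * E a) * r = krausMap (petzKraus E r s) Y := by
  change _ = krausMap (fun a => r * (E a)ᴴ * s⁻¹) Y
  rw [krausMap_mul_right, krausMap_mul_left, conjTranspose_nonsing_inv, hs, hr]
  simp only [krausMap, conjTranspose_conjTranspose]

theorem sum_conjTranspose_petzKraus_mul_self (hr : rᴴ = r) (hs : sᴴ = s)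
    (hsE : s * s = krausMap E (r * r)) (hdet : IsUnit s.det) :
    ∑ a, (petzKraus E r s a)ᴴ * petzKraus E r s a = 1 := by
  calc ∑ a, (petzKraus E r s a)ᴴ * petzKraus E r s a
        = s⁻¹ * krausMap E (r * r) * s⁻¹ := by
        simp only [petzKraus, krausMap, Matrix.mul_sum, Matrix.sum_mul, conjTranspose_mul,
          conjTranspose_nonsing_inv, conjTranspose_conjTranspose, hr, hs, Matrix.mul_assoc]
    _ = 1 := by rw [← hsE, inv_mul_mul_self_mul_inv hdet]

end Petz

theorem stmt13_general {n k m : ℕ} (E : Fin m → Matrix (Fin k) (Fin n) ℂ)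
    (htp : ∑ a, (E a)ᴴ * E a = 1)
    (ρ : Matrix (Fin n) (Fin n) ℂ) (hρ : ρ.PosDef)
    (σ : Matrix (Fin k) (Fin k) ℂ) (hσdef : σ = ∑ a, E a * ρ * (E a)ᴴ)
    (hσ : σ.PosDef)
    (R : Matrix (Fin k) (Fin k) ℂ → Matrix (Fin n) (Fin n) ℂ)
    (hR : ∀ Y, R Y = (posSemidefSqrt13 hρ.posSemidef) *
        (∑ a, (E a)ᴴ * (((posSemidefSqrt13 hσ.posSemidef))⁻¹ * Y * ((posSemidefSqrt13 hσ.posSemidef))⁻¹) * E a) *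
          (posSemidefSqrt13 hρ.posSemidef)) :
    (∀ Y, (R Y).trace = Y.trace) ∧
    (∀ (d : ℕ) (M : Matrix (Fin d × Fin k) (Fin d × Fin k) ℂ), M.PosSemidef →
      (tensorId13 R M).PosSemidef) ∧
    R σ = ρ := by
  set r := posSemidefSqrt13 hρ.posSemidef
  set s := posSemidefSqrt13 hσ.posSemidef
  have hrr : r * r = ρ := posSemidefSqrt13_mul_self hρ.posSemidef
  have hss : s * s = σ := posSemidefSqrt13_mul_self hσ.posSemidef
  have hr : rᴴ = r := conjTranspose_posSemidefSqrt13 hρ.posSemidef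
  have hs : sᴴ = s := conjTranspose_posSemidefSqrt13 hσ.posSemidef
  have hdet : IsUnit s.det :=
    isUnit_of_mul_isUnit_left (by rw [← det_mul, hss]; exact hσ.det_pos.ne'.isUnit)
  have hRK : R = krausMap (petzKraus E r s) :=
    funext fun Y => by rw [hR, petz_eq_krausMap_petzKraus E hr hs]
  have hTP :=
    sum_conjTranspose_petzKraus_mul_self E hr hs (by rw [hss, hrr, hσdef, krausMap]) hdet
  refine ⟨hRK ▸ trace_krausMap hTP,
    fun d M hM => hRK ▸ posSemidef_tensorId13_krausMap _ hM, ?_⟩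
  rw [hR, ← hss, inv_mul_mul_self_mul_inv hdet]
  simp only [Matrix.mul_one, htp, hrr]

/-- for a CPTP map E (with Kraus operators E_a) and a positive definite
state ρ with E(ρ) positive definite, the Petz recovery map
R(Y) = ρ^{1/2} E†(E(ρ)^{-1/2} Y E(ρ)^{-1/2}) ρ^{1/2} is completely positive,
trace-preserving, and satisfies R(E(ρ)) = ρ. -/
theorem stmt13 {n k m : ℕ} (E : Fin m → Matrix (Fin k) (Fin n) ℂ)
    (htp : ∑ a, (E a)ᴴ * E a = 1)
    (ρ : Matrix (Fin n) (Fin n) ℂ) (hρ : ρ.PosDef) (htrρ : ρ.trace = 1)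
    (σ : Matrix (Fin k) (Fin k) ℂ) (hσdef : σ = ∑ a, E a * ρ * (E a)ᴴ)
    (hσ : σ.PosDef)
    (R : Matrix (Fin k) (Fin k) ℂ → Matrix (Fin n) (Fin n) ℂ)
    (hR : ∀ Y, R Y = (posSemidefSqrt13 hρ.posSemidef) *
        (∑ a, (E a)ᴴ * (((posSemidefSqrt13 hσ.posSemidef))⁻¹ * Y * ((posSemidefSqrt13 hσ.posSemidef))⁻¹) * E a) *
          (posSemidefSqrt13 hρ.posSemidef)) :
    (∀ Y, (R Y).trace = Y.trace) ∧
    (∀ (d : ℕ) (M : Matrix (Fin d × Fin k) (Fin d × Fin k) ℂ), M.PosSemidef →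
      (tensorId13 R M).PosSemidef) ∧
    R σ = ρ :=
  stmt13_general E htp ρ hρ σ hσdef hσ R hR
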